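/- Monotonicity of SAℓCA in the memory parameter: if ℓ' > ℓ > 1 (both at most H), then B^H(S_{ℓ'}) ⊆ B^H(S_ℓ); that is, larger memory length yields a tighter over-approximation of the behavior set of S. -/

import Mathlib

/-- A transition system `(X, X0, E, Y, H)`. -/
structure TS (X Y : Type*) where
  init : Set X
  edge : X → X → Prop
  out : X → Y

/-- The set of `H`-long output behaviors of a transition system. -/
def BehH {X Y : Type*} (S : TS X Y) (H : ℕ) : Set (List Y) :=
  {b | ∃ r : ℕ → X, r 0 ∈ S.init ∧ (∀ k, k + 1 < H → S.edge (r k) (r (k + 1))) ∧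
        b = (List.range H).map fun k => S.out (r k)}

/-- The set of `ℓ`-long contiguous subsequences of a set of behaviors. -/
def Xell {Y : Type*} (B : Set (List Y)) (ℓ : ℕ) : Set (List Y) :=
  {σ | σ.length = ℓ ∧ ∃ b ∈ B, σ <:+: b}

/-- The (strongest asynchronous) `ℓ`-complete abstraction built from a behavior set `B`
with initial-output set `Y0`: states are `ℓ`-long subsequences, transitions follow the
domino rule, the output is the first symbol. -/
def AbsTS {Y : Type*} [Inhabited Y] (B : Set (List Y)) (Y0 : Set Y) (ℓ : ℕ) :
    TS (List Y) Y where
  init := {σ | σ ∈ Xell B ℓ ∧ ∃ y ∈ Y0, σ.head? = some y}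
  edge := fun σ σ' => σ ∈ Xell B ℓ ∧ σ' ∈ Xell B ℓ ∧ σ.tail = σ'.dropLast
  out := fun σ => σ.headI

/-- The SAℓCA of a transition system `S` for horizon `H`. -/
def SAlCA {X Y : Type*} [Inhabited Y] (S : TS X Y) (H ℓ : ℕ) : TS (List Y) Y :=
  AbsTS (BehH S H) (S.out '' S.init) ℓ

/-- `H`-long behaviors of the abstraction built from behavior set `B`: a run of
`H - ℓ + 1` abstract states (windows) flattened into `H` output symbols (the heads of
the windows followed by the tail of the last window). -/
def AbsBeh {Y : Type*} [Inhabited Y] (B : Set (List Y)) (Y0 : Set Y) (H ℓ : ℕ) :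
    Set (List Y) :=
  {b | ∃ r : ℕ → List Y, r 0 ∈ (AbsTS B Y0 ℓ).init ∧
        (∀ k, k + 1 ≤ H - ℓ → (AbsTS B Y0 ℓ).edge (r k) (r (k + 1))) ∧
        b = ((List.range (H - ℓ + 1)).map fun k => (r k).headI) ++ (r (H - ℓ)).tail}

/-- `H`-long behaviors of the SAℓCA of `S`. -/
def AbsBehH {X Y : Type*} [Inhabited Y] (S : TS X Y) (H ℓ : ℕ) : Set (List Y) :=
  AbsBeh (BehH S H) (S.out '' S.init) H ℓ

/-!
A run of the ℓ-abstraction obeys the domino rule, so each abstract state is the previous one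
shifted by one symbol: the run is exactly the sequence of ℓ-long windows of the word it spells.
Hence a word of length `H` is an `H`-long behavior of `S_ℓ` iff its first symbol is an initial
output of `S` and each of its ℓ-windows is an ℓ-long subsequence of an `H`-long behavior of `S`.
For `ℓ < ℓ'`, every ℓ-window of a behavior of `S_ℓ'` lies inside one of its ℓ'-windows, and an
infix of a subsequence of a behavior is again a subsequence of it.
-/

namespace List

variable {α : Type*}

def window (l : List α) (k n : ℕ) : List α := (l.drop k).take n

theorem length_window {l : List α} {k n : ℕ} (h : k + n ≤ l.length) :
    (l.window k n).length = n := by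
  simp only [window, length_take, length_drop]
  omega

theorem window_isInfix_window {l : List α} {j k m n : ℕ} (hjk : j ≤ k) (h : k + m ≤ j + n) :
    l.window k m <:+: l.window j n := by
  have hwin : l.window k m = ((l.window j n).drop (k - j)).take m := by
    simp only [window]
    rw [drop_take, drop_drop, take_take, Nat.add_sub_cancel' hjk, Nat.min_eq_left (by omega)]
  rw [hwin]
  exact (take_prefix _ _).isInfix.trans (drop_suffix _ _).isInfix

theorem tail_window (l : List α) (k n : ℕ) : (l.window k (n + 1)).tail = l.window (k + 1) n := by
  rw [window, window, ← drop_one, drop_take, drop_drop, Nat.add_sub_cancel, Nat.add_comm]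

theorem dropLast_window {l : List α} {k n : ℕ} (h : k + n ≤ l.length) :
    (l.window k n).dropLast = l.window k (n - 1) := by
  rw [dropLast_eq_take, length_window h, window, window, take_take, Nat.min_eq_left (by omega)]

theorem head?_window (l : List α) (k : ℕ) {n : ℕ} (hn : n ≠ 0) :
    (l.window k n).head? = (l.drop k).head? := by
  simp [window, head?_take, hn]

theorem headI_window [Inhabited α] (l : List α) (k : ℕ) {n : ℕ} (hn : n ≠ 0) :
    (l.window k n).headI = (l.drop k).headI := by
  rw [← getI_zero_eq_headI, ← getI_zero_eq_headI, getI_eq_getElem?_getD, getI_eq_getElem?_getD,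
    window, getElem?_take_of_lt (Nat.pos_of_ne_zero hn)]

theorem headI_cons_tail [Inhabited α] {l : List α} (h : l ≠ []) : l.headI :: l.tail = l := by
  cases l with
  | nil => exact absurd rfl h
  | cons => rfl

theorem map_range_headI_drop [Inhabited α] {l : List α} {n : ℕ} (h : n ≤ l.length) :
    (range n).map (fun k => (l.drop k).headI) = l.take n := by
  refine ext_getElem (by simp [h]) fun k hk _ => ?_
  simp only [length_map, length_range] at hk
  rw [getElem_map, getElem_range, getElem_take, drop_eq_getElem_cons (by omega), headI_cons]

end List

open List

section Domino

variable {Y : Type*} [Inhabited Y]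

def IsDominoRun (r : ℕ → List Y) (N : ℕ) : Prop :=
  ∀ i < N, r i ≠ [] ∧ (r i).tail = (r (i + 1)).dropLast

def dominoWord (r : ℕ → List Y) (n : ℕ) : List Y :=
  ((range n).map fun k => (r k).headI) ++ r n

theorem length_dominoWord (r : ℕ → List Y) (n : ℕ) :
    (dominoWord r n).length = n + (r n).length := by
  simp [dominoWord]

theorem drop_dominoWord (r : ℕ → List Y) (n : ℕ) : (dominoWord r n).drop n = r n := by
  simp [dominoWord]

theorem map_range_succ_append_tail {r : ℕ → List Y} {n : ℕ} (hr : r n ≠ []) :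
    ((range (n + 1)).map fun k => (r k).headI) ++ (r n).tail = dominoWord r n := by
  rw [dominoWord, range_succ, map_append, append_assoc, map_singleton, singleton_append,
    headI_cons_tail hr]

theorem dominoWord_prefix_succ {r : ℕ → List Y} {n : ℕ} (hr : r n ≠ [])
    (hd : (r n).tail = (r (n + 1)).dropLast) : dominoWord r n <+: dominoWord r (n + 1) := by
  rw [dominoWord, dominoWord, range_succ, map_append, append_assoc, prefix_append_right_inj,
    map_singleton, singleton_append, ← headI_cons_tail hr, hd, headI_cons, cons_prefix_cons]
  exact ⟨rfl, dropLast_prefix _⟩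

theorem dominoWord_prefix {r : ℕ → List Y} {k N : ℕ}
    (hrun : IsDominoRun r N) (hk : k ≤ N) :
    dominoWord r k <+: dominoWord r N := by
  induction N, hk using Nat.le_induction with
  | base => exact prefix_refl _
  | succ N hkN ih =>
    have ⟨hr, hd⟩ := hrun N (Nat.lt_succ_self N)
    exact (ih fun i hi => hrun i (by omega)).trans (dominoWord_prefix_succ hr hd)

theorem eq_window_dominoWord {r : ℕ → List Y} {k N : ℕ}
    (hrun : IsDominoRun r N) (hk : k ≤ N) :
    r k = (dominoWord r N).window k (r k).length := by
  have hpre := prefix_iff_eq_take.1 (dominoWord_prefix hrun hk)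
  rw [length_dominoWord] at hpre
  calc r k = (dominoWord r k).drop k := (drop_dominoWord r k).symm
    _ = (dominoWord r N).window k (r k).length := by
      rw [hpre, drop_take, Nat.add_sub_cancel_left, window]

end Domino

section Abstraction

variable {Y : Type*}

theorem mem_Xell_of_isInfix {B : Set (List Y)} {σ τ : List Y} {m n : ℕ} (hσ : σ ∈ Xell B n)
    (hτ : τ <:+: σ) (hlen : τ.length = m) : τ ∈ Xell B m :=
  let ⟨_, b, hb, hσb⟩ := hσ
  ⟨hlen, b, hb, hτ.trans hσb⟩

variable [Inhabited Y]

theorem windows_of_mem_absBeh {B : Set (List Y)} {Y0 : Set Y} {H ℓ : ℕ} {b : List Y}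
    (hℓ : ℓ ≠ 0) (hH : ℓ ≤ H) (hb : b ∈ AbsBeh B Y0 H ℓ) :
    b.length = H ∧ (∃ y ∈ Y0, b.head? = some y) ∧ ∀ k ≤ H - ℓ, b.window k ℓ ∈ Xell B ℓ := by
  obtain ⟨r, ⟨hX0, y, hy, hhead⟩, hedge, rfl⟩ := hb
  have hX : ∀ k ≤ H - ℓ, r k ∈ Xell B ℓ := by
    rintro (_ | k) hk
    exacts [hX0, (hedge k hk).2.1]
  have hne : ∀ k ≤ H - ℓ, r k ≠ [] := fun k hk hnil =>
    hℓ (by simpa [hnil, eq_comm] using (hX k hk).1)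
  have hrun : IsDominoRun r (H - ℓ) := fun i hi => ⟨hne i hi.le, (hedge i hi).2.2⟩
  have hwin : ∀ k ≤ H - ℓ, r k = (dominoWord r (H - ℓ)).window k ℓ := fun k hk => by
    simpa only [(hX k hk).1] using eq_window_dominoWord hrun hk
  rw [map_range_succ_append_tail (hne _ le_rfl)]
  refine ⟨?_, ⟨y, hy, ?_⟩, fun k hk => hwin k hk ▸ hX k hk⟩
  · rw [length_dominoWord, (hX _ le_rfl).1]
    omega
  · rw [← hhead, hwin 0 (Nat.zero_le _), head?_window _ _ hℓ, drop_zero]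

theorem mem_absBeh_of_windows {B : Set (List Y)} {Y0 : Set Y} {H ℓ : ℕ} {b : List Y}
    (hℓ : ℓ ≠ 0) (hlen : b.length = H) (hhead : ∃ y ∈ Y0, b.head? = some y)
    (hwin : ∀ k ≤ H - ℓ, b.window k ℓ ∈ Xell B ℓ) : b ∈ AbsBeh B Y0 H ℓ := by
  obtain ⟨y, hy, hhead⟩ := hhead
  have hH : ℓ ≤ H := by
    have := (hwin 0 (Nat.zero_le _)).1
    simp only [window, drop_zero, length_take] at this
    omega
  refine ⟨fun k => b.window k ℓ, ⟨hwin 0 (Nat.zero_le _), y, hy, ?_⟩,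
    fun k hk => ⟨hwin k (by omega), hwin (k + 1) hk, ?_⟩, ?_⟩
  · rw [head?_window _ _ hℓ, drop_zero, hhead]
  · obtain ⟨m, rfl⟩ := Nat.exists_eq_succ_of_ne_zero hℓ
    rw [tail_window, dropLast_window (by omega)]
    rfl
  · have hlast : b.window (H - ℓ) ℓ = b.drop (H - ℓ) := by
      rw [window, take_of_length_le (by rw [length_drop]; omega)]
    have hne : b.window (H - ℓ) ℓ ≠ [] := by
      rw [hlast, ← length_pos_iff, length_drop]
      omega
    rw [map_range_succ_append_tail (r := (b.window · ℓ)) hne, dominoWord, hlast]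
    simp only [headI_window _ _ hℓ]
    rw [map_range_headI_drop (by omega), take_append_drop]

end Abstraction

/-- monotonicity in the memory parameter: for `H ≥ ℓ' > ℓ > 1`,
`B^H(S_{ℓ'}) ⊆ B^H(S_ℓ)`. -/
theorem stmt2 {X Y : Type*} [Inhabited Y] (S : TS X Y) (H ℓ ℓ' : ℕ)
    (h1 : 1 < ℓ) (h2 : ℓ < ℓ') (h3 : ℓ' ≤ H) :
    AbsBehH S H ℓ' ⊆ AbsBehH S H ℓ := by
  intro b hb
  obtain ⟨hlen, hhead, hwin⟩ := windows_of_mem_absBeh (by omega) (by omega) hb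
  refine mem_absBeh_of_windows (by omega) hlen hhead fun k hk => ?_
  have hj := hwin (min k (H - ℓ')) (min_le_right _ _)
  exact mem_Xell_of_isInfix hj (window_isInfix_window (min_le_left _ _) (by omega))
    (length_window (by omega))
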